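/- Let Q > 0, λ > 0, and let ξ be a symmetric random variable with |ξ| ≤ 1 almost surely. Define the random capacity Q̂ = Q(1 + λξ). If a real number x satisfies x ≤ Q - θ where θ = Qλ√(-2 log q) for some q ∈ (0,1], then P(x > Q̂) ≤ q. -/

import Mathlib

/-!
Write `t = √(-2 log q)`, so that `q = exp (-t² / 2)`; the event `x > Q̂` forces `ξ < -t`.
The Hoeffding-type bound `P(ξ < -t) ≤ exp (-t² / 2)` holds here for an elementary reason:
for `t ≥ 1` the event is null since `|ξ| ≤ 1`, while for `t < 1` symmetry gives
`P(ξ < -t) ≤ 1/2 < exp (-1/2) ≤ exp (-t² / 2)`.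
-/

open MeasureTheory Real

namespace SymmetricBounded

variable {Ω : Type*} [MeasurableSpace Ω] {μ : Measure Ω} {ξ : Ω → ℝ}

theorem measure_lt_neg_eq_measure_gt (hmeas : Measurable ξ)
    (hsym : Measure.map ξ μ = Measure.map (fun ω => -ξ ω) μ) (t : ℝ) :
    μ {ω | ξ ω < -t} = μ {ω | t < ξ ω} := by
  have h := congrArg (· (Set.Iio (-t))) hsym
  rw [Measure.map_apply hmeas measurableSet_Iio,
    Measure.map_apply (f := fun ω => -ξ ω) hmeas.neg measurableSet_Iio] at h
  simpa [Set.preimage, neg_lt_neg_iff] using h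

theorem measureReal_lt_neg_le_half [IsProbabilityMeasure μ] (hmeas : Measurable ξ)
    (hsym : Measure.map ξ μ = Measure.map (fun ω => -ξ ω) μ) {t : ℝ} (ht : 0 ≤ t) :
    μ.real {ω | ξ ω < -t} ≤ 1 / 2 := by
  have hdisj : Disjoint {ω | ξ ω < -t} {ω | t < ξ ω} :=
    Set.disjoint_left.mpr fun ω h₁ h₂ => by
      simp only [Set.mem_ofPred_eq] at h₁ h₂
      linarith
  have hsum : μ.real {ω | ξ ω < -t} + μ.real {ω | t < ξ ω} ≤ 1 := by
    rw [← measureReal_union hdisj (hmeas measurableSet_Ioi)]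
    exact measureReal_le_one
  rw [measureReal_def, measureReal_def, ← measure_lt_neg_eq_measure_gt hmeas hsym t,
    ← measureReal_def] at hsum
  linarith

theorem measure_lt_neg_eq_zero (hbdd : ∀ᵐ ω ∂μ, |ξ ω| ≤ 1) {t : ℝ} (ht : 1 ≤ t) :
    μ {ω | ξ ω < -t} = 0 :=
  measure_mono_null (fun ω (hω : ξ ω < -t) => by
      simp only [Set.mem_ofPred_eq, not_le]
      linarith [neg_le_abs (ξ ω)])
    (ae_iff.mp hbdd)

theorem measureReal_lt_neg_le_exp [IsProbabilityMeasure μ] (hmeas : Measurable ξ)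
    (hsym : Measure.map ξ μ = Measure.map (fun ω => -ξ ω) μ) (hbdd : ∀ᵐ ω ∂μ, |ξ ω| ≤ 1)
    {t : ℝ} (ht : 0 ≤ t) :
    μ.real {ω | ξ ω < -t} ≤ exp (-t ^ 2 / 2) := by
  rcases le_or_gt 1 t with ht₁ | ht₁
  · rw [measureReal_def, measure_lt_neg_eq_zero hbdd ht₁, ENNReal.toReal_zero]
    positivity
  · calc μ.real {ω | ξ ω < -t} ≤ 1 / 2 := measureReal_lt_neg_le_half hmeas hsym ht
      _ ≤ exp (-(1 / 2)) := by linarith [add_one_le_exp (-(1 / 2))]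
      _ ≤ exp (-t ^ 2 / 2) := exp_le_exp.mpr (by nlinarith)

end SymmetricBounded

theorem exp_neg_sq_sqrt_neg_two_mul_log_div_two {q : ℝ} (hq₀ : 0 < q) (hq₁ : q ≤ 1) :
    exp (-sqrt (-2 * log q) ^ 2 / 2) = q := by
  rw [sq_sqrt (by linarith [log_nonpos hq₀.le hq₁])]
  rw [show -(-2 * log q) / 2 = log q by ring, exp_log hq₀]

theorem stmt_5 {Ω : Type*} [MeasurableSpace Ω] (μ : Measure Ω) [IsProbabilityMeasure μ]
    (ξ : Ω → ℝ) (hmeas : Measurable ξ)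
    (hsym : Measure.map ξ μ = Measure.map (fun ω => -ξ ω) μ)
    (hbdd : ∀ᵐ ω ∂μ, |ξ ω| ≤ 1)
    (Q lam q x : ℝ) (hQ : 0 < Q) (hlam : 0 < lam) (hq : q ∈ Set.Ioc (0:ℝ) 1)
    (hx : x ≤ Q - Real.sqrt (-2 * Real.log q) * Q * lam) :
    (μ {ω | Q * (1 + lam * ξ ω) < x}).toReal ≤ q := by
  obtain ⟨hq₀, hq₁⟩ := hq
  set t := sqrt (-2 * log q)
  have hsub : {ω | Q * (1 + lam * ξ ω) < x} ⊆ {ω | ξ ω < -t} := fun ω (hω : _ < x) => by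
    show ξ ω < -t
    nlinarith [mul_pos hQ hlam]
  calc (μ {ω | Q * (1 + lam * ξ ω) < x}).toReal
      ≤ μ.real {ω | ξ ω < -t} := measureReal_mono hsub
    _ ≤ exp (-t ^ 2 / 2) :=
      SymmetricBounded.measureReal_lt_neg_le_exp hmeas hsym hbdd (sqrt_nonneg _)
    _ = q := exp_neg_sq_sqrt_neg_two_mul_log_div_two hq₀ hq₁
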